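/- arXiv:1711.05807 — 4 statements merged into one kernel-verified Lean document; each statement's English description precedes it below -/
import Mathlib

section
/- Let p be a prime Fermat number, i.e. a prime of the form p = 2^m + 1 where m is a power of 2, and let ε = cos(2π/p) + i·sin(2π/p). Then the set {1, ε, ε², …, ε^{p−1}} of all p-th roots of unity is constructible from the set {1} in at most 12·p² operations. -/
/-- One operation: to a set `A ⊆ ℂ` containing `x, y` we may add `x + y`, `x - y`,
`x * y`, `x / y` (when `y ≠ 0`), or any `z` with `z ^ 2 = x`. -/
def Step (A B : Set ℂ) : Prop :=
  ∃ z : ℂ, B = insert z A ∧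
    ((∃ x ∈ A, ∃ y ∈ A, z = x + y ∨ z = x - y ∨ z = x * y ∨ (y ≠ 0 ∧ z = x / y)) ∨
      ∃ x ∈ A, z ^ 2 = x)

/-- `S` is constructible from `B` in at most `n` operations: there is a chain
`B = A 0, A 1, …, A k` with `k ≤ n`, each set obtained from the previous one by one
operation, such that `S ⊆ A k`. -/
def ConstructibleIn (B S : Set ℂ) (n : ℕ) : Prop :=
  ∃ k ≤ n, ∃ A : ℕ → Set ℂ,
    A 0 = B ∧ (∀ i < k, Step (A i) (A (i + 1))) ∧ S ⊆ A k

/-- Exact-length chains of steps. -/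
inductive Chain : Set ℂ → Set ℂ → ℕ → Prop
  | refl (B : Set ℂ) : Chain B B 0
  | tail {B C D : Set ℂ} {n : ℕ} : Chain B C n → Step C D → Chain B D (n + 1)

/-- `Reaches B C n`: from `B` one can reach the set `C` in at most `n` operations. -/
def Reaches (B C : Set ℂ) (n : ℕ) : Prop := ∃ k ≤ n, Chain B C k

theorem Reaches.refl (B : Set ℂ) (n : ℕ) : Reaches B B n := ⟨0, Nat.zero_le n, Chain.refl B⟩

theorem Reaches.mono {B C : Set ℂ} {n n' : ℕ} (h : Reaches B C n) (hn : n ≤ n') :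
    Reaches B C n' := by obtain ⟨k, hk, hc⟩ := h; exact ⟨k, hk.trans hn, hc⟩

theorem Chain.trans {B C D : Set ℂ} {m n : ℕ} (h1 : Chain B C m) (h2 : Chain C D n) :
    Chain B D (m + n) := by
  induction h2 with
  | refl => exact h1
  | tail h s ih => exact (ih).tail s

theorem Reaches.trans {B C D : Set ℂ} {m n : ℕ} (h1 : Reaches B C m) (h2 : Reaches C D n) :
    Reaches B D (m + n) := by
  obtain ⟨k1, hk1, hc1⟩ := h1
  obtain ⟨k2, hk2, hc2⟩ := h2
  exact ⟨k1 + k2, Nat.add_le_add hk1 hk2, hc1.trans hc2⟩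

theorem Step.subset {A B : Set ℂ} (h : Step A B) : A ⊆ B := by
  obtain ⟨z, rfl, -⟩ := h; exact Set.subset_insert z A

theorem Chain.subset {B C : Set ℂ} {n : ℕ} (h : Chain B C n) : B ⊆ C := by
  induction h with
  | refl => exact subset_rfl
  | tail h s ih => exact ih.trans s.subset

theorem Reaches.subset {B C : Set ℂ} {n : ℕ} (h : Reaches B C n) : B ⊆ C := by
  obtain ⟨k, -, hc⟩ := h; exact hc.subset

theorem Reaches.single {B : Set ℂ} {z : ℂ}
    (h : (∃ x ∈ B, ∃ y ∈ B, z = x + y ∨ z = x - y ∨ z = x * y ∨ (y ≠ 0 ∧ z = x / y)) ∨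
      ∃ x ∈ B, z ^ 2 = x) : Reaches B (insert z B) 1 :=
  ⟨1, le_rfl, (Chain.refl B).tail ⟨z, rfl, h⟩⟩

theorem Reaches.add_step {B : Set ℂ} {x y : ℂ} (hx : x ∈ B) (hy : y ∈ B) :
    Reaches B (insert (x + y) B) 1 := .single (.inl ⟨x, hx, y, hy, .inl rfl⟩)

theorem Reaches.sub_step {B : Set ℂ} {x y : ℂ} (hx : x ∈ B) (hy : y ∈ B) :
    Reaches B (insert (x - y) B) 1 := .single (.inl ⟨x, hx, y, hy, .inr (.inl rfl)⟩)

theorem Reaches.mul_step {B : Set ℂ} {x y : ℂ} (hx : x ∈ B) (hy : y ∈ B) :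
    Reaches B (insert (x * y) B) 1 := .single (.inl ⟨x, hx, y, hy, .inr (.inr (.inl rfl))⟩)

theorem Reaches.div_step {B : Set ℂ} {x y : ℂ} (hx : x ∈ B) (hy : y ∈ B) (h0 : y ≠ 0) :
    Reaches B (insert (x / y) B) 1 := .single (.inl ⟨x, hx, y, hy, .inr (.inr (.inr ⟨h0, rfl⟩))⟩)

theorem Reaches.sqrt_step {B : Set ℂ} {x z : ℂ} (hx : x ∈ B) (hz : z ^ 2 = x) :
    Reaches B (insert z B) 1 := .single (.inr ⟨x, hx, hz⟩)

/-- Convert a chain to the `ConstructibleIn` form. -/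
theorem Chain.toFun {B C : Set ℂ} {k : ℕ} (h : Chain B C k) :
    ∃ A : ℕ → Set ℂ, A 0 = B ∧ (∀ i < k, Step (A i) (A (i + 1))) ∧ A k = C := by
  induction h with
  | refl => exact ⟨fun _ => B, rfl, fun i hi => absurd hi (Nat.not_lt_zero i), rfl⟩
  | @tail C D n h s ih =>
    obtain ⟨A, hA0, hAs, hAk⟩ := ih
    refine ⟨fun i => if i ≤ n then A i else D, by simp [hA0], fun i hi => ?_, by simp⟩
    rcases Nat.lt_or_ge i n with hin | hin
    · simpa [hin.le, Nat.succ_le_of_lt hin] using hAs i hin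
    · have : i = n := le_antisymm (Nat.lt_succ_iff.mp hi) hin
      subst this
      simpa [hAk] using s

theorem Reaches.constructibleIn {B C S : Set ℂ} {n : ℕ} (h : Reaches B C n) (hS : S ⊆ C) :
    ConstructibleIn B S n := by
  obtain ⟨k, hk, hc⟩ := h
  obtain ⟨A, hA0, hAs, hAk⟩ := hc.toFun
  exact ⟨k, hk, A, hA0, hAs, hAk ▸ hS⟩

/-- Sum of finitely many constructed elements. -/
theorem reaches_sum {α : Type*} (s : Finset α) (f : α → ℂ) {B : Set ℂ}
    (h : ∀ a ∈ s, f a ∈ B) (h0 : (0 : ℂ) ∈ B) :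
    ∃ C, Reaches B C s.card ∧ B ⊆ C ∧ ∑ a ∈ s, f a ∈ C := by
  classical
  induction s using Finset.induction_on with
  | empty => exact ⟨B, .refl B 0, subset_rfl, by simpa using h0⟩
  | @insert a s ha ih =>
    obtain ⟨C, hC, hBC, hsum⟩ := ih (fun b hb => h b (Finset.mem_insert_of_mem hb))
    have hfa : f a ∈ C := hBC (h a (Finset.mem_insert_self a s))
    refine ⟨insert (f a + ∑ b ∈ s, f b) C, ?_, ?_, ?_⟩
    · refine (hC.trans (Reaches.add_step hfa hsum)).mono ?_
      rw [Finset.card_insert_of_notMem ha]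
    · exact hBC.trans (Set.subset_insert _ _)
    · rw [Finset.sum_insert ha]; exact Set.mem_insert _ _

/-- Powers of a constructed element. -/
theorem reaches_pow {x : ℂ} {B : Set ℂ} (hx : x ∈ B) (h1 : (1 : ℂ) ∈ B) (n : ℕ) :
    ∃ C, Reaches B C n ∧ B ⊆ C ∧ ∀ i ≤ n + 1, x ^ i ∈ C := by
  induction n with
  | zero =>
    refine ⟨B, .refl B 0, subset_rfl, fun i hi => ?_⟩
    interval_cases i
    · simpa using h1
    · simpa using hx
  | succ n ih =>
    obtain ⟨C, hC, hBC, hpow⟩ := ih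
    refine ⟨insert (x ^ (n + 1) * x) C, ?_, hBC.trans (Set.subset_insert _ _), fun i hi => ?_⟩
    · exact (hC.trans (Reaches.mul_step (hpow (n + 1) le_rfl) (hBC hx))).mono (by omega)
    · rcases Nat.lt_or_ge i (n + 2) with h | h
      · exact Set.mem_insert_of_mem _ (hpow i (by omega))
      · have : i = n + 2 := by omega
        subst this
        rw [pow_succ]
        exact Set.mem_insert _ _

/-- Natural numbers are constructible. -/
theorem reaches_nat {B : Set ℂ} (h1 : (1 : ℂ) ∈ B) (h0 : (0 : ℂ) ∈ B) (n : ℕ) :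
    ∃ C, Reaches B C n ∧ B ⊆ C ∧ ∀ i ≤ n + 1, (i : ℂ) ∈ C := by
  induction n with
  | zero =>
    refine ⟨B, .refl B 0, subset_rfl, fun i hi => ?_⟩
    interval_cases i
    · simpa using h0
    · simpa using h1
  | succ n ih =>
    obtain ⟨C, hC, hBC, hnat⟩ := ih
    have hn1 : ((n : ℂ) + 1) ∈ C := by
      have := hnat (n + 1) le_rfl; push_cast at this; exact this
    refine ⟨insert (((n : ℂ) + 1) + 1) C, ?_, hBC.trans (Set.subset_insert _ _), fun i hi => ?_⟩
    · exact (hC.trans (Reaches.add_step hn1 (hBC h1))).mono (by omega)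
    · rcases Nat.lt_or_ge i (n + 2) with h | h
      · exact Set.mem_insert_of_mem _ (hnat i (by omega))
      · have : i = n + 2 := by omega
        subst this
        have he : (((n + 2 : ℕ)) : ℂ) = ((n : ℂ) + 1) + 1 := by push_cast; ring
        rw [he]
        exact Set.mem_insert _ _

/-- Batch construction: extend by one element per index, each costing at most `c` steps. -/
theorem reaches_batch {α : Type*} (s : Finset α) (e : α → ℂ) (c : ℕ) {B : Set ℂ}
    (h : ∀ C : Set ℂ, B ⊆ C → ∀ a ∈ s, ∃ C', Reaches C C' c ∧ C ⊆ C' ∧ e a ∈ C') :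
    ∃ C', Reaches B C' (s.card * c) ∧ B ⊆ C' ∧ ∀ a ∈ s, e a ∈ C' := by
  classical
  induction s using Finset.induction_on generalizing B with
  | empty => exact ⟨B, by simpa using Reaches.refl B 0, subset_rfl, by simp⟩
  | @insert a s ha ih =>
    obtain ⟨C1, hC1, hBC1, hea⟩ := h B subset_rfl a (Finset.mem_insert_self a s)
    obtain ⟨C', hC', hC1C', hall⟩ := ih (B := C1)
      (fun C hC b hb => h C (hBC1.trans hC) b (Finset.mem_insert_of_mem hb))
    refine ⟨C', ?_, hBC1.trans hC1C', fun b hb => ?_⟩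
    · have := hC1.trans hC'
      refine this.mono ?_
      rw [Finset.card_insert_of_notMem ha]
      ring_nf
      omega
    · rcases Finset.mem_insert.mp hb with rfl | hb
      · exact hC1C' hea
      · exact hall b hb

section Main

open Complex


/-- If `p = 2 ^ m + 1` is a prime Fermat number (`m` a power of `2`) and
`ε = cos (2π/p) + i sin (2π/p)`, then the set `{1, ε, ε², …, ε^(p-1)}` of all `p`-th
roots of unity is constructible from `{1}` in at most `12 p ^ 2` operations. -/
theorem fermat_polygon_multiple_complexity (p m j : ℕ) (hm : m = 2 ^ j)
    (hp : p = 2 ^ m + 1) (hprime : p.Prime) (ε : ℂ)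
    (hε : ε = Complex.cos (2 * Real.pi / p) + Complex.I * Complex.sin (2 * Real.pi / p)) :
    ConstructibleIn {1} {z : ℂ | ∃ i < p, z = ε ^ i} (12 * p ^ 2) := by
  classical
  haveI : Fact p.Prime := ⟨hprime⟩
  haveI : NeZero p := ⟨hprime.ne_zero⟩
  haveI : Fact (1 < p) := ⟨hprime.one_lt⟩
  have hm1 : 1 ≤ m := by rw [hm]; exact Nat.one_le_two_pow
  have h2m : 2 ≤ 2 ^ m := by calc 2 = 2 ^ 1 := rfl
                                 _ ≤ 2 ^ m := Nat.pow_le_pow_right (by norm_num) hm1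
  have hp3 : 3 ≤ p := by omega
  have hpm : p - 1 = 2 ^ m := by omega
  have hmp : m < p := by
    have := Nat.lt_two_pow_self (n := m)
    omega
  -- ε is a primitive p-th root of unity
  have hεexp : ε = Complex.exp (2 * ↑Real.pi * Complex.I / (p : ℂ)) := by
    rw [hε, mul_comm Complex.I, ← Complex.exp_mul_I]
    congr 1
    ring
  have hprim : IsPrimitiveRoot ε p := by
    rw [hεexp]; exact Complex.isPrimitiveRoot_exp p hprime.ne_zero
  have hεp : ε ^ p = 1 := hprim.pow_eq_one
  -- the additive character
  set ψ : AddChar (ZMod p) ℂ := AddChar.zmodChar p hεp with hψdef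
  have hψprim : ψ.IsPrimitive := AddChar.zmodChar_primitive_of_primitive_root p hprim
  have hψ1 : ψ (1 : ZMod p) = ε := by
    rw [hψdef, AddChar.zmodChar_apply, ZMod.val_one, pow_one]
  have hψne : ψ ≠ 1 := by
    intro h
    have h1 : ψ 1 = 1 := by rw [h]; rfl
    rw [hψ1] at h1
    exact (hprim.ne_one hprime.one_lt) h1
  -- the character group
  haveI : NeZero ((Monoid.exponent (ZMod p)ˣ : ℂ)) :=
    ⟨Nat.cast_ne_zero.mpr Monoid.exponent_ne_zero_of_finite⟩
  have hcard : Fintype.card (DirichletCharacter ℂ p) = p - 1 := by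
    rw [← Nat.card_eq_fintype_card, DirichletCharacter.card_eq_totient_of_hasEnoughRootsOfUnity,
      Nat.totient_prime hprime]
  have hχpow : ∀ χ : DirichletCharacter ℂ p, χ ^ (2 ^ m) = 1 := by
    intro χ
    rw [← hpm, ← hcard]
    exact pow_card_eq_one
  have hvalpow : ∀ (χ : DirichletCharacter ℂ p) (x : ZMod p), χ x = 0 ∨ χ x ^ (2 ^ m) = 1 := by
    intro χ x
    by_cases hx : IsUnit x
    · right
      have hx0 : x ≠ 0 := hx.ne_zero
      rw [← map_pow, ← hpm, ZMod.pow_card_sub_one_eq_one hx0, map_one]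
    · exact Or.inl (χ.map_nonunit hx)
  -- the trivial Gauss sum
  have hg1 : gaussSum (1 : DirichletCharacter ℂ p) ψ = -1 := by
    have hsum : ∑ x : ZMod p, ψ x = 0 := AddChar.sum_eq_zero_of_ne_one hψne
    have hterm : ∀ x : ZMod p, (1 : DirichletCharacter ℂ p) x * ψ x
        = ψ x - (if x = 0 then 1 else 0) := by
      intro x
      by_cases hx : x = 0
      · subst hx
        rw [MulChar.map_nonunit _ not_isUnit_zero, AddChar.map_zero_eq_one]
        simp
      · rw [MulChar.one_apply (isUnit_iff_ne_zero.mpr hx)]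
        simp [hx]
    rw [gaussSum]
    simp only [hterm]
    rw [Finset.sum_sub_distrib, hsum, Finset.sum_ite_eq' Finset.univ (0 : ZMod p)
      (fun _ => (1 : ℂ))]
    simp
  -- Fourier inversion at 1
  have hfourier : ∑ χ : DirichletCharacter ℂ p, gaussSum χ ψ = ((p - 1 : ℕ) : ℂ) * ε := by
    have h1 : ∑ χ : DirichletCharacter ℂ p, gaussSum χ ψ
        = ∑ x : ZMod p, (∑ χ : DirichletCharacter ℂ p, χ x) * ψ x := by
      simp_rw [gaussSum, Finset.sum_mul]
      exact Finset.sum_comm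
    rw [h1, Finset.sum_eq_single_of_mem (1 : ZMod p) (Finset.mem_univ _)]
    · rw [hψ1]
      congr 1
      rw [Finset.sum_congr rfl fun (χ : DirichletCharacter ℂ p) _ => map_one χ,
        Finset.sum_const, Finset.card_univ, hcard]
      simp
    · intro x _ hx
      rw [DirichletCharacter.sum_characters_eq_zero ℂ hx, zero_mul]
  -- ### Stage 1: construct 0
  have h1B : (1 : ℂ) ∈ ({1} : Set ℂ) := rfl
  obtain ⟨C1, hR1, hB1, h01, h11⟩ :
      ∃ C1, Reaches {1} C1 1 ∧ ({1} : Set ℂ) ⊆ C1 ∧ (0 : ℂ) ∈ C1 ∧ (1 : ℂ) ∈ C1 := by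
    refine ⟨insert (1 - 1) {1}, Reaches.sub_step h1B h1B, Set.subset_insert _ _, ?_,
      Set.mem_insert_of_mem _ rfl⟩
    rw [show (0 : ℂ) = 1 - 1 by ring]
    exact Set.mem_insert _ _
  -- ### Stage 2: natural numbers up to p + 2
  obtain ⟨C2, hR2, hC1C2, hnat2⟩ := reaches_nat h11 h01 (p + 1)
  have h02 : (0 : ℂ) ∈ C2 := hC1C2 h01
  have h12 : (1 : ℂ) ∈ C2 := hC1C2 h11
  -- ### Stage 3: the tower of square roots: θ a = exp(2πi/2^a)
  set θ : ℕ → ℂ := fun a => Complex.exp (2 * ↑Real.pi * Complex.I / ((2 ^ a : ℕ) : ℂ)) with hθdef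
  have hθ0 : θ 0 = 1 := by
    simp only [hθdef, pow_zero, Nat.cast_one, div_one]
    exact Complex.exp_two_pi_mul_I
  have hθsq : ∀ a, θ (a + 1) ^ 2 = θ a := by
    intro a
    simp only [hθdef]
    rw [sq, ← Complex.exp_add]
    congr 1
    have h2 : ((2 : ℂ)) ^ a ≠ 0 := pow_ne_zero _ two_ne_zero
    push_cast
    field_simp
    ring
  have hθprim : IsPrimitiveRoot (θ m) (2 ^ m) := by
    have := Complex.isPrimitiveRoot_exp (2 ^ m) (by positivity)
    simpa [hθdef] using this
  obtain ⟨C3, hR3, hC2C3, hθm3⟩ : ∃ C3, Reaches C2 C3 m ∧ C2 ⊆ C3 ∧ θ m ∈ C3 := by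
    have : ∀ a : ℕ, ∃ C, Reaches C2 C a ∧ C2 ⊆ C ∧ θ a ∈ C := by
      intro a
      induction a with
      | zero => exact ⟨C2, Reaches.refl C2 0, subset_rfl, hθ0 ▸ h12⟩
      | succ a ih =>
        obtain ⟨C, hC, hC2C, hθa⟩ := ih
        exact ⟨insert (θ (a + 1)) C,
          hC.trans (Reaches.sqrt_step hθa (hθsq a)),
          hC2C.trans (Set.subset_insert _ _), Set.mem_insert _ _⟩
    exact this m
  have h13 : (1 : ℂ) ∈ C3 := hC2C3 h12
  -- ### Stage 4: all 2^m-th roots of unity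
  obtain ⟨C4, hR4, hC3C4, hθpow⟩ := reaches_pow hθm3 h13 (2 ^ m)
  haveI : NeZero (2 ^ m) := ⟨by positivity⟩
  have hroots4 : ∀ z : ℂ, z ^ (2 ^ m) = 1 → z ∈ C4 := by
    intro z hz
    obtain ⟨i, hi, rfl⟩ := hθprim.eq_pow_of_pow_eq_one hz
    exact hθpow i (by omega)
  have hC2C4 : C2 ⊆ C4 := hC2C3.trans hC3C4
  have h0C4 : (0 : ℂ) ∈ C4 := hC2C4 h02
  have h1C4 : (1 : ℂ) ∈ C4 := hC2C4 h12
  have hnatC4 : ∀ i ≤ p + 2, ((i : ℕ) : ℂ) ∈ C4 := fun i hi => hC2C4 (hnat2 i hi)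
  have hneg1C4 : (-1 : ℂ) ∈ C4 := by
    refine hroots4 (-1) ?_
    have heven : Even (2 ^ m) := by
      obtain ⟨k, rfl⟩ : ∃ k, m = k + 1 := ⟨m - 1, by omega⟩
      rw [pow_succ]
      exact even_two.mul_left _
    exact heven.neg_one_pow
  have hχvalC4 : ∀ (χ : DirichletCharacter ℂ p) (x : ZMod p), χ x ∈ C4 := by
    intro χ x
    rcases hvalpow χ x with h | h
    · rw [h]; exact h0C4
    · exact hroots4 _ h
  -- ### Stage 5: all Gauss sums
  set s : ℕ → Finset (DirichletCharacter ℂ p) :=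
    fun a => Finset.univ.filter fun χ => χ ^ (2 ^ a) = 1 with hsdef
  have hs_mono : ∀ a, s a ⊆ s (a + 1) := by
    intro a χ hχ
    simp only [hsdef, Finset.mem_filter, Finset.mem_univ, true_and] at hχ ⊢
    rw [pow_succ, pow_mul, hχ, one_pow]
  have gauss_key : ∀ a : ℕ, ∃ C, Reaches C4 C ((2 * p + 9) * (s a).card) ∧ C4 ⊆ C ∧
      ∀ χ ∈ s a, gaussSum χ ψ ∈ C := by
    intro a
    induction a with
    | zero =>
      refine ⟨C4, (Reaches.refl C4 0).mono (Nat.zero_le _), subset_rfl, ?_⟩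
      intro χ hχ
      simp only [hsdef, Finset.mem_filter, Finset.mem_univ, true_and, pow_zero, pow_one] at hχ
      rw [hχ, hg1]
      exact hneg1C4
    | succ a ih =>
      obtain ⟨Ca, hCa, hC4Ca, hga⟩ := ih
      have hbatch : ∀ C : Set ℂ, Ca ⊆ C → ∀ χ ∈ s (a + 1) \ s a,
          ∃ C', Reaches C C' (2 * p + 9) ∧ C ⊆ C' ∧ gaussSum χ ψ ∈ C' := by
        intro C hCaC χ hχ
        have hC4C : C4 ⊆ C := hC4Ca.trans hCaC
        rw [Finset.mem_sdiff] at hχ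
        obtain ⟨hχ1, hχ2⟩ := hχ
        simp only [hsdef, Finset.mem_filter, Finset.mem_univ, true_and] at hχ1 hχ2
        have hχne : χ ≠ 1 := fun h => hχ2 (by rw [h, one_pow])
        have hsq_mem : gaussSum (χ * χ) ψ ∈ C := by
          apply hCaC; apply hga
          simp only [hsdef, Finset.mem_filter, Finset.mem_univ, true_and]
          rw [← sq, ← pow_mul, mul_comm 2 (2 ^ a), ← pow_succ]
          exact hχ1
        by_cases hq : χ * χ = 1
        · -- quadratic character case
          have hquad : χ.IsQuadratic := by
            intro x
            by_cases hx : IsUnit x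
            · have h2 : χ x * χ x = 1 := by
                rw [← MulChar.mul_apply, hq, MulChar.one_apply hx]
              have hfac : (χ x - 1) * (χ x + 1) = 0 := by linear_combination h2
              rcases mul_eq_zero.mp hfac with h | h
              · exact Or.inr (Or.inl (by linear_combination h))
              · exact Or.inr (Or.inr (by linear_combination h))
            · exact Or.inl (χ.map_nonunit hx)
          have hzsq : gaussSum χ ψ ^ 2 = χ (-1) * ((p : ℕ) : ℂ) := by
            have := gaussSum_sq hχne hquad hψprim
            rwa [ZMod.card p] at this
          have hχm1 : χ (-1) ∈ C := hC4C (hχvalC4 χ (-1))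
          have hpC : ((p : ℕ) : ℂ) ∈ C := hC4C (hnatC4 p (by omega))
          refine ⟨insert (gaussSum χ ψ) (insert (χ (-1) * ((p : ℕ) : ℂ)) C), ?_, ?_,
            Set.mem_insert _ _⟩
          · exact ((Reaches.mul_step hχm1 hpC).trans
              (Reaches.sqrt_step (Set.mem_insert _ _) hzsq)).mono (by omega)
          · exact (Set.subset_insert _ _).trans (Set.subset_insert _ _)
        · -- general case via Jacobi sums
          have hterm : ∀ C1 : Set ℂ, C ⊆ C1 → ∀ x ∈ (Finset.univ : Finset (ZMod p)),
              ∃ C', Reaches C1 C' 1 ∧ C1 ⊆ C' ∧ χ x * χ (1 - x) ∈ C' := by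
            intro C1 hCC1 x _
            exact ⟨insert (χ x * χ (1 - x)) C1,
              Reaches.mul_step (hCC1 (hC4C (hχvalC4 χ x))) (hCC1 (hC4C (hχvalC4 χ (1 - x)))),
              Set.subset_insert _ _, Set.mem_insert _ _⟩
          obtain ⟨C1, hC1, hCC1, hterms⟩ :=
            reaches_batch Finset.univ (fun x => χ x * χ (1 - x)) 1 hterm
          obtain ⟨C2', hC2', hC1C2', hJ⟩ :=
            reaches_sum Finset.univ (fun x => χ x * χ (1 - x)) hterms (hCC1 (hC4C h0C4))
          have hJmem : jacobiSum χ χ ∈ C2' := hJ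
          have hgmem : gaussSum (χ * χ) ψ ∈ C2' := hC1C2' (hCC1 hsq_mem)
          have hzsq : gaussSum χ ψ ^ 2 = gaussSum (χ * χ) ψ * jacobiSum χ χ := by
            rw [sq]; exact (jacobiSum_mul_nontrivial hq ψ).symm
          refine ⟨insert (gaussSum χ ψ) (insert (gaussSum (χ * χ) ψ * jacobiSum χ χ) C2'),
            ?_, ?_, Set.mem_insert _ _⟩
          · have hall := ((hC1.trans hC2').trans ((Reaches.mul_step hgmem hJmem).trans
              (Reaches.sqrt_step (Set.mem_insert _ _) hzsq)))
            refine hall.mono ?_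
            have hcardZ : (Finset.univ : Finset (ZMod p)).card = p := by
              rw [Finset.card_univ, ZMod.card]
            rw [hcardZ]
            omega
          · exact ((hCC1.trans hC1C2').trans (Set.subset_insert _ _)).trans
              (Set.subset_insert _ _)
      obtain ⟨C', hC', hCaC', hgall⟩ :=
        reaches_batch (s (a + 1) \ s a) (fun χ => gaussSum χ ψ) (2 * p + 9) hbatch
      refine ⟨C', ?_, hC4Ca.trans hCaC', ?_⟩
      · have hadd : (s (a + 1) \ s a).card + (s a).card = (s (a + 1)).card :=
          Finset.card_sdiff_add_card_eq_card (hs_mono a)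
        have heq : (2 * p + 9) * (s a).card + (s (a + 1) \ s a).card * (2 * p + 9)
            = (2 * p + 9) * (s (a + 1)).card := by rw [← hadd]; ring
        exact (hCa.trans hC').mono (le_of_eq heq)
      · intro χ hχ
        by_cases h : χ ∈ s a
        · exact hCaC' (hga χ h)
        · exact hgall χ (Finset.mem_sdiff.mpr ⟨hχ, h⟩)
  obtain ⟨C5, hR5, hC4C5, hgauss⟩ := gauss_key m
  have hsm : s m = Finset.univ := by
    ext χ
    simp [hsdef, hχpow χ]
  rw [hsm, Finset.card_univ, hcard] at hR5
  rw [hsm] at hgauss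
  -- ### Stage 6: sum of all Gauss sums
  obtain ⟨C6, hR6, hC5C6, hsum6⟩ :=
    reaches_sum Finset.univ (fun χ : DirichletCharacter ℂ p => gaussSum χ ψ) hgauss
      (hC4C5 h0C4)
  have hcardG : (Finset.univ : Finset (DirichletCharacter ℂ p)).card = p - 1 := by
    rw [Finset.card_univ, hcard]
  rw [hcardG] at hR6
  -- ### Stage 7: divide to get ε
  have hp1ne : ((p - 1 : ℕ) : ℂ) ≠ 0 := Nat.cast_ne_zero.mpr (by omega)
  have hp1mem : ((p - 1 : ℕ) : ℂ) ∈ C6 := hC5C6 (hC4C5 (hnatC4 (p - 1) (by omega)))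
  have hεdiv : (∑ χ : DirichletCharacter ℂ p, gaussSum χ ψ) / ((p - 1 : ℕ) : ℂ) = ε := by
    rw [hfourier]
    exact mul_div_cancel_left₀ ε hp1ne
  obtain ⟨C7, hR7, hC6C7, hεmem⟩ : ∃ C7, Reaches C6 C7 1 ∧ C6 ⊆ C7 ∧ ε ∈ C7 := by
    refine ⟨insert ((∑ χ : DirichletCharacter ℂ p, gaussSum χ ψ) / ((p - 1 : ℕ) : ℂ)) C6,
      Reaches.div_step hsum6 hp1mem hp1ne, Set.subset_insert _ _, ?_⟩
    rw [← hεdiv]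
    exact Set.mem_insert _ _
  -- ### Stage 8: all powers of ε
  obtain ⟨C8, hR8, hC7C8, hεpow⟩ := reaches_pow hεmem (hC6C7 (hC5C6 (hC4C5 h1C4))) p
  -- ### Put everything together
  have htotal : Reaches {1} C8
      (1 + (p + 1) + m + 2 ^ m + (2 * p + 9) * (p - 1) + (p - 1) + 1 + p) :=
    ((((((hR1.trans hR2).trans hR3).trans hR4).trans hR5).trans hR6).trans hR7).trans hR8
  refine (htotal.mono ?_).constructibleIn ?_
  · rw [← hpm]
    nlinarith [hp3, hmp, sq_nonneg p]
  · rintro z ⟨i, hip, rfl⟩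
    exact hεpow i (by omega)

end Main
end

section
/- Let p = 2^m + 1 be prime, let g be a primitive root modulo p, and for k ∈ {0,1,…,m−1} and an integer t let N_{k,t} denote the number of pairs (c,d) of residues modulo 2^{m−k−1} satisfying g^{2^{k+1}·c + t} + g^{2^{k+1}·d + 2^k + t} ≡ 1 (mod p). Then for any k ∈ {0,1,…,m−1} and any integers t₁, t₂ with t₁ ≡ t₂ (mod 2^k), one has N_{k,t₁} = N_{k,t₂}. -/
/-- `NN p m g k t` is the number of pairs `(c, d)` of residues modulo `2 ^ (m - k - 1)`
satisfying `g ^ (2 ^ (k + 1) * c + t) + g ^ (2 ^ (k + 1) * d + 2 ^ k + t) ≡ 1 (mod p)`,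
where `g` is a unit modulo `p` (exponents are integers, i.e. are taken modulo the order
of `g`, which is `p - 1` for a primitive root). -/
def NN (p m : ℕ) (g : (ZMod p)ˣ) (k : ℕ) (t : ℤ) : ℕ :=
  ((Finset.range (2 ^ (m - k - 1)) ×ˢ Finset.range (2 ^ (m - k - 1))).filter
    (fun cd : ℕ × ℕ =>
      (↑(g ^ ((2 : ℤ) ^ (k + 1) * (cd.1 : ℤ) + t)) : ZMod p)
        + (↑(g ^ ((2 : ℤ) ^ (k + 1) * (cd.2 : ℤ) + (2 : ℤ) ^ k + t)) : ZMod p) = 1)).card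

/-!
Replacing `t` by `t + 2 ^ k` exchanges the roles of the two summands: `(c, d)` solves the
congruence for `t + 2 ^ k` exactly when `(d + 1, c)` solves it for `t`. Since `g ^ (p - 1) = 1`
with `p - 1 = 2 ^ m`, the condition is periodic in `c` with period `2 ^ (m - k - 1)`, so shifting
`c` by one does not change the count. Hence `N_{k,t}` is `2 ^ k`-periodic in `t`.
-/

open Finset

theorem Nat.count_add_one_of_periodic {P : ℕ → Prop} [DecidablePred P] {M : ℕ}
    (hP : Function.Periodic P M) : Nat.count (fun n ↦ P (n + 1)) M = Nat.count P M := by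
  have h := Nat.count_succ' P M
  have h0 : P M = P 0 := by simpa using hP 0
  simp only [Nat.count_succ, h0] at h
  omega

theorem card_filter_range_prod_swap_add_one_of_periodic {Q : ℕ → ℕ → Prop} [DecidableRel Q]
    {M : ℕ} (hQ : ∀ d, Function.Periodic (Q · d) M) :
    #{cd ∈ range M ×ˢ range M | Q (cd.2 + 1) cd.1} = #{cd ∈ range M ×ˢ range M | Q cd.1 cd.2} := by
  rw [card_filter, card_filter, sum_product, sum_product_right]
  simp only [← card_filter, ← Nat.count_eq_card_filter_range, Nat.count_add_one_of_periodic (hQ _)]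

theorem NN_periodic {p : ℕ} (m : ℕ) (g : (ZMod p)ˣ) (k : ℕ) (hg : orderOf g ∣ 2 ^ m) :
    Function.Periodic (NN p m g k) (2 ^ k) := by
  intro t
  let Q (c d : ℕ) : Prop :=
    (↑(g ^ ((2 : ℤ) ^ (k + 1) * c + t)) : ZMod p) + ↑(g ^ ((2 : ℤ) ^ (k + 1) * d + 2 ^ k + t)) = 1
  have hperiod : g ^ ((2 : ℤ) ^ (k + 1) * (2 ^ (m - k - 1) : ℕ)) = 1 := by
    rw [← orderOf_dvd_iff_zpow_eq_one]
    push_cast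
    rw [← pow_add]
    exact_mod_cast hg.trans (pow_dvd_pow 2 (by omega))
  have hQ : ∀ d, Function.Periodic (Q · d) (2 ^ (m - k - 1)) := by
    intro d c
    simp only [Q, Nat.cast_add, mul_add, add_right_comm _ _ t, zpow_add _ _ t]
    rw [zpow_add, hperiod, mul_one]
  rw [NN, NN, ← card_filter_range_prod_swap_add_one_of_periodic hQ]
  congr! 3 with cd
  rw [add_comm, pow_succ]
  push_cast
  ring_nf

theorem N_eq_of_modeq_pow_general (p m : ℕ) (hp : p = 2 ^ m + 1) (hprime : p.Prime)
    (g : (ZMod p)ˣ) (k : ℕ)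
    (t₁ t₂ : ℤ) (ht : t₁ ≡ t₂ [ZMOD (2 : ℤ) ^ k]) :
    NN p m g k t₁ = NN p m g k t₂ := by
  have : Fact p.Prime := ⟨hprime⟩
  have hg : orderOf g ∣ 2 ^ m := by
    simpa [hp] using ZMod.orderOf_units_dvd_card_sub_one g
  obtain ⟨s, hs⟩ := ht.dvd
  rw [show t₂ = t₁ + s * 2 ^ k by linarith]
  simpa using ((NN_periodic m g k hg).int_mul s t₁).symm

/-- If `p = 2 ^ m + 1` is prime, `g` is a primitive root modulo `p`,
`k ∈ {0, …, m - 1}` and `t₁ ≡ t₂ (mod 2 ^ k)`, then `N_{k,t₁} = N_{k,t₂}`. -/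
theorem N_eq_of_modeq_pow (p m : ℕ) (hp : p = 2 ^ m + 1) (hprime : p.Prime)
    (g : (ZMod p)ˣ) (hg : orderOf g = p - 1) (k : ℕ) (hk : k < m)
    (t₁ t₂ : ℤ) (ht : t₁ ≡ t₂ [ZMOD (2 : ℤ) ^ k]) :
    NN p m g k t₁ = NN p m g k t₂ :=
  N_eq_of_modeq_pow_general p m hp hprime g k t₁ t₂ ht
end

section
/- For any complex numbers x₁ and x₂, the set {x₁, x₂} is constructible in at most 9 operations from the set {x₁ + x₂, x₁·x₂, 1, 2, 4} (using the quadratic formula x_{1,2} = (−b ± √(b² − 4c))/2 with b = −(x₁ + x₂) and c = x₁·x₂). -/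
/-!
The quadratic formula in eight operations: with `s = x₁ + x₂` and `p = x₁ * x₂`, form
`s * s`, `4 * p`, the discriminant `s * s - 4 * p`, its square root `d = x₁ - x₂`, then
`s + d`, `s - d` and finally `x₁ = (s + d) / 2`, `x₂ = (s - d) / 2`.
-/

namespace Step

variable {A : Set ℂ} {x y : ℂ}

theorem insert_add (hx : x ∈ A) (hy : y ∈ A) : Step A (insert (x + y) A) :=
  ⟨_, rfl, .inl ⟨x, hx, y, hy, .inl rfl⟩⟩

theorem insert_sub (hx : x ∈ A) (hy : y ∈ A) : Step A (insert (x - y) A) :=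
  ⟨_, rfl, .inl ⟨x, hx, y, hy, .inr (.inl rfl)⟩⟩

theorem insert_mul (hx : x ∈ A) (hy : y ∈ A) : Step A (insert (x * y) A) :=
  ⟨_, rfl, .inl ⟨x, hx, y, hy, .inr (.inr (.inl rfl))⟩⟩

theorem insert_div (hx : x ∈ A) (hy : y ∈ A) (hy₀ : y ≠ 0) : Step A (insert (x / y) A) :=
  ⟨_, rfl, .inl ⟨x, hx, y, hy, .inr (.inr (.inr ⟨hy₀, rfl⟩))⟩⟩

theorem insert_of_sq_eq {z : ℂ} (hx : x ∈ A) (hz : z ^ 2 = x) : Step A (insert z A) :=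
  ⟨z, rfl, .inr ⟨x, hx, hz⟩⟩

end Step

namespace ConstructibleIn

variable {A B S : Set ℂ} {n : ℕ}

theorem of_subset (h : S ⊆ B) : ConstructibleIn B S 0 :=
  ⟨0, le_rfl, fun _ => B, rfl, fun _ hi => absurd hi (Nat.not_lt_zero _), h⟩

theorem mono {m : ℕ} (h : ConstructibleIn B S n) (hnm : n ≤ m) : ConstructibleIn B S m :=
  let ⟨k, hk, rest⟩ := h
  ⟨k, hk.trans hnm, rest⟩

theorem of_step (hAB : Step A B) (h : ConstructibleIn B S n) :
    ConstructibleIn A S (n + 1) := by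
  obtain ⟨k, hk, C, hC₀, hC, hS⟩ := h
  refine ⟨k + 1, by omega, fun | 0 => A | i + 1 => C i, rfl, ?_, hS⟩
  rintro (_ | i) hi
  · simpa [hC₀] using hAB
  · exact hC i (by omega)

end ConstructibleIn

/-- For any complex numbers `x₁, x₂`, the set `{x₁, x₂}` is constructible in at most
`9` operations from `{x₁ + x₂, x₁ * x₂, 1, 2, 4}` (via the quadratic formula). -/
theorem roots_constructible_from_vieta (x₁ x₂ : ℂ) :
    ConstructibleIn {x₁ + x₂, x₁ * x₂, 1, 2, 4} {x₁, x₂} 9 := by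
  set s := x₁ + x₂
  set p := x₁ * x₂
  set d := x₁ - x₂
  have hd : d ^ 2 = s * s - 4 * p := by ring
  have hx₁ : x₁ = (s + d) / 2 := by ring
  have hx₂ : x₂ = (s - d) / 2 := by ring
  refine ConstructibleIn.mono ?_ (show 8 ≤ 9 by norm_num)
  refine .of_step (.insert_mul (x := s) (y := s) (by simp) (by simp)) ?_
  refine .of_step (.insert_mul (x := 4) (y := p) (by simp) (by simp)) ?_
  refine .of_step (.insert_sub (x := s * s) (y := 4 * p) (by simp) (by simp)) ?_
  refine .of_step (.insert_of_sq_eq (by simp) hd) ?_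
  refine .of_step (.insert_add (x := s) (y := d) (by simp) (by simp)) ?_
  refine .of_step (.insert_sub (x := s) (y := d) (by simp) (by simp)) ?_
  refine .of_step (.insert_div (x := s + d) (y := 2) (by simp) (by simp) two_ne_zero) ?_
  refine .of_step (.insert_div (x := s - d) (y := 2) (by simp) (by simp) two_ne_zero) ?_
  exact .of_subset (Set.pair_subset (by rw [hx₁]; simp) (by rw [hx₂]; simp))
end

section
/- There exists a real constant C, not depending on p, such that for every prime Fermat number p (a prime of the form p = 2^m + 1 with m a power of 2), the real number cos(2π/p) is constructible from the set {1} ⊆ ℝ in at most C·p² real operations, where the square-root operation may only be applied to nonnegative real numbers. -/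
/-- One real operation: to a set `A ⊆ ℝ` containing `x, y` we may add `x + y`, `x - y`,
`x * y`, `x / y` (when `y ≠ 0`), or the number `z ≥ 0` with `z ^ 2 = x` for some
`x ∈ A` with `x ≥ 0` (square roots only of nonnegative numbers). -/
def StepR (A B : Set ℝ) : Prop :=
  ∃ z : ℝ, B = insert z A ∧
    ((∃ x ∈ A, ∃ y ∈ A, z = x + y ∨ z = x - y ∨ z = x * y ∨ (y ≠ 0 ∧ z = x / y)) ∨
      ∃ x ∈ A, 0 ≤ x ∧ 0 ≤ z ∧ z ^ 2 = x)

/-- `t` is constructible from `B ⊆ ℝ` in at most `n` real operations: there is a chain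
`B = A 0, A 1, …, A k` with `k ≤ n`, each set obtained from the previous one by one
real operation, such that `t ∈ A k`. -/
def RConstructibleIn (B : Set ℝ) (t : ℝ) (n : ℕ) : Prop :=
  ∃ k ≤ n, ∃ A : ℕ → Set ℝ,
    A 0 = B ∧ (∀ i < k, StepR (A i) (A (i + 1))) ∧ t ∈ A k

namespace GaussCon

/-- `Reach n A B` : from `A` we can get to `B` in at most `n` real operations. -/
def Reach : ℕ → Set ℝ → Set ℝ → Prop
  | 0, A, B => B = A
  | (n+1), A, B => Reach n A B ∨ ∃ C, StepR A C ∧ Reach n C B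

theorem reach_refl (A : Set ℝ) : ∀ n, Reach n A A
  | 0 => rfl
  | (n+1) => Or.inl (reach_refl A n)

theorem reach_succ {n A B} (h : Reach n A B) : Reach (n+1) A B := Or.inl h

theorem reach_mono {n n' : ℕ} (h : n ≤ n') {A B} (hr : Reach n A B) : Reach n' A B := by
  induction h with
  | refl => exact hr
  | step _ ih => exact Or.inl ih

theorem stepR_subset {A B} (h : StepR A B) : A ⊆ B := by
  obtain ⟨z, rfl, -⟩ := h; exact Set.subset_insert _ _

theorem reach_subset : ∀ {n A B}, Reach n A B → A ⊆ B := by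
  intro n
  induction n with
  | zero => intro A B h; rw [h]
  | succ n ih =>
    intro A B h
    rcases h with h | ⟨C, hs, hr⟩
    · exact ih h
    · exact (stepR_subset hs).trans (ih hr)

theorem reach_trans : ∀ {n n' : ℕ} {A B C}, Reach n A B → Reach n' B C → Reach (n + n') A C := by
  intro n
  induction n with
  | zero => intro n' A B C h h'; cases h; simpa using h'
  | succ n ih =>
    intro n' A B C h h'
    rcases h with h | ⟨D, hs, hr⟩
    · exact reach_mono (by omega) (ih h h')
    · have : Reach (n + n') D C := ih hr h'
      exact (by omega : n + 1 + n' = (n + n') + 1) ▸ Or.inr ⟨D, hs, this⟩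

theorem reach_step {A B} (h : StepR A B) : Reach 1 A B := Or.inr ⟨B, h, rfl⟩

/-- Extraction of an explicit chain. -/
theorem reach_chain : ∀ {n : ℕ} {A B}, Reach n A B →
    ∃ k ≤ n, ∃ F : ℕ → Set ℝ, F 0 = A ∧ (∀ i < k, StepR (F i) (F (i + 1))) ∧ F k = B := by
  intro n
  induction n with
  | zero => intro A B h; exact ⟨0, le_rfl, fun _ => A, rfl, by omega, h.symm⟩
  | succ n ih =>
    intro A B h
    rcases h with h | ⟨C, hs, hr⟩
    · obtain ⟨k, hk, F, h0, hstep, hend⟩ := ih h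
      exact ⟨k, by omega, F, h0, hstep, hend⟩
    · obtain ⟨k, hk, F, h0, hstep, hend⟩ := ih hr
      refine ⟨k + 1, by omega, fun i => if i = 0 then A else F (i - 1), by simp, ?_, by simp [hend]⟩
      intro i hi
      cases i with
      | zero => simpa [h0] using hs
      | succ i => simpa using hstep i (by omega)

theorem rConstructibleIn_of_reach {n A B t} (h : Reach n A B) (ht : t ∈ B) :
    RConstructibleIn A t n := by
  obtain ⟨k, hk, F, h0, hstep, hend⟩ := reach_chain h
  exact ⟨k, hk, F, h0, hstep, hend ▸ ht⟩

/-! Single-step constructions. -/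

theorem ext_add {A : Set ℝ} {x y : ℝ} (hx : x ∈ A) (hy : y ∈ A) :
    ∃ B, Reach 1 A B ∧ A ⊆ B ∧ x + y ∈ B :=
  ⟨insert (x+y) A, reach_step ⟨x+y, rfl, Or.inl ⟨x, hx, y, hy, Or.inl rfl⟩⟩,
    Set.subset_insert _ _, Set.mem_insert _ _⟩

theorem ext_sub {A : Set ℝ} {x y : ℝ} (hx : x ∈ A) (hy : y ∈ A) :
    ∃ B, Reach 1 A B ∧ A ⊆ B ∧ x - y ∈ B :=
  ⟨insert (x-y) A, reach_step ⟨x-y, rfl, Or.inl ⟨x, hx, y, hy, Or.inr (Or.inl rfl)⟩⟩,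
    Set.subset_insert _ _, Set.mem_insert _ _⟩

theorem ext_mul {A : Set ℝ} {x y : ℝ} (hx : x ∈ A) (hy : y ∈ A) :
    ∃ B, Reach 1 A B ∧ A ⊆ B ∧ x * y ∈ B :=
  ⟨insert (x*y) A, reach_step ⟨x*y, rfl, Or.inl ⟨x, hx, y, hy, Or.inr (Or.inr (Or.inl rfl))⟩⟩,
    Set.subset_insert _ _, Set.mem_insert _ _⟩

theorem ext_div {A : Set ℝ} {x y : ℝ} (hx : x ∈ A) (hy : y ∈ A) (hy0 : y ≠ 0) :
    ∃ B, Reach 1 A B ∧ A ⊆ B ∧ x / y ∈ B :=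
  ⟨insert (x/y) A, reach_step ⟨x/y, rfl, Or.inl ⟨x, hx, y, hy, Or.inr (Or.inr (Or.inr ⟨hy0, rfl⟩))⟩⟩,
    Set.subset_insert _ _, Set.mem_insert _ _⟩

theorem ext_sqrt {A : Set ℝ} {x : ℝ} (hx : x ∈ A) (h0 : 0 ≤ x) :
    ∃ B, Reach 1 A B ∧ A ⊆ B ∧ Real.sqrt x ∈ B :=
  ⟨insert (Real.sqrt x) A,
    reach_step ⟨Real.sqrt x, rfl, Or.inr ⟨x, hx, h0, Real.sqrt_nonneg x, Real.sq_sqrt h0⟩⟩,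
    Set.subset_insert _ _, Set.mem_insert _ _⟩

/-- Linear combinations: cost `2 * card`. Requires `0 ∈ A`. -/
theorem ext_combo {ι : Type*} (s : Finset ι) (c v : ι → ℝ) {A : Set ℝ}
    (h0 : (0:ℝ) ∈ A) (h : ∀ i ∈ s, c i ∈ A ∧ v i ∈ A) :
    ∃ B, Reach (2 * s.card) A B ∧ A ⊆ B ∧ (∑ i ∈ s, c i * v i) ∈ B := by
  classical
  induction s using Finset.induction_on with
  | empty => exact ⟨A, reach_refl A _, le_rfl, by simpa using h0⟩
  | @insert a s ha ih =>
    obtain ⟨B1, hr1, hsub1, hm1⟩ := ih (fun i hi => h i (Finset.mem_insert_of_mem hi))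
    have hca : c a ∈ B1 := hsub1 (h a (Finset.mem_insert_self a s)).1
    have hva : v a ∈ B1 := hsub1 (h a (Finset.mem_insert_self a s)).2
    obtain ⟨B2, hr2, hsub2, hm2⟩ := ext_mul hca hva
    obtain ⟨B3, hr3, hsub3, hm3⟩ := ext_add hm2 (hsub2 hm1)
    refine ⟨B3, ?_, (hsub1.trans hsub2).trans hsub3, ?_⟩
    · have := reach_trans hr1 (reach_trans hr2 hr3)
      refine reach_mono ?_ this
      rw [Finset.card_insert_of_notMem ha]; omega
    · rwa [Finset.sum_insert ha]

/-- Build all naturals up to `M`, and `-1`, from a set containing 1. -/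
theorem ext_nats {A : Set ℝ} (h1 : (1:ℝ) ∈ A) (M : ℕ) :
    ∃ B, Reach (M + 2) A B ∧ A ⊆ B ∧ (∀ n : ℕ, n ≤ M → (n:ℝ) ∈ B) ∧ (-1:ℝ) ∈ B := by
  induction M with
  | zero =>
    obtain ⟨B1, hr1, hsub1, hm1⟩ := ext_sub h1 h1
    obtain ⟨B2, hr2, hsub2, hm2⟩ := ext_sub hm1 (hsub1 h1)
    have h0 : (0:ℝ) ∈ B2 := by simpa using hsub2 hm1
    have hrr : Reach (1+1) A B2 := reach_trans hr1 hr2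
    refine ⟨B2, reach_mono (by omega) hrr, hsub1.trans hsub2, fun n hn => ?_, by simpa using hm2⟩
    interval_cases n; simpa using h0
  | succ M ih =>
    obtain ⟨B, hr, hsub, hnat, hneg⟩ := ih
    obtain ⟨B2, hr2, hsub2, hm2⟩ := ext_add (hnat M le_rfl) (hsub h1)
    refine ⟨B2, reach_mono (by omega) (reach_trans hr hr2), hsub.trans hsub2, fun n hn => ?_,
      hsub2 hneg⟩
    rcases Nat.lt_or_ge n (M+1) with h | h
    · exact hsub2 (hnat n (by omega))
    · have : n = M + 1 := by omega
      subst this; push_cast; exact hm2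

end GaussCon


open Complex in
theorem quad_roots {S Q e e' : ℂ} (hsum : e + e' = S) (hprod : e * e' = Q)
    {a b r x y : ℝ} (ha : a = (S^2 - 4*Q).re) (hb : b = (S^2 - 4*Q).im)
    (hr : r = Real.sqrt (a*a + b*b)) (hx : x = Real.sqrt ((r+a)/2))
    (hy : y = Real.sqrt ((r-a)/2)) :
    (e.re = (S.re + x)/2 ∨ e.re = (S.re - x)/2) ∧
    (e.im = (S.im + y)/2 ∨ e.im = (S.im - y)/2) := by
  set w : ℂ := 2*e - S with hw
  have hw2 : w^2 = S^2 - 4*Q := by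
    rw [hw, ← hsum, ← hprod]; ring
  have habs : r = w.re * w.re + w.im * w.im := by
    have h1 : Real.sqrt (a*a + b*b) = ‖w^2‖ := by
      rw [ha, hb, hw2]
      rw [Complex.norm_def, Complex.normSq_apply]
    have h2 : ‖w^2‖ = ‖w‖^2 := by
      rw [norm_pow]
    rw [hr, h1, h2, Complex.sq_norm, Complex.normSq_apply]
  have hare : a = w.re * w.re - w.im * w.im := by
    rw [ha, ← hw2]
    simp [pow_two, Complex.mul_re]
  have hxre : x = |w.re| := by
    rw [hx]
    have : (r + a)/2 = w.re * w.re := by rw [habs, hare]; ring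
    rw [this, ← Real.sqrt_sq_eq_abs, pow_two]
  have hyim : y = |w.im| := by
    rw [hy]
    have : (r - a)/2 = w.im * w.im := by rw [habs, hare]; ring
    rw [this, ← Real.sqrt_sq_eq_abs, pow_two]
  have hwre : w.re = 2 * e.re - S.re := by simp [hw]
  have hwim : w.im = 2 * e.im - S.im := by simp [hw]
  constructor
  · rcases abs_choice w.re with h | h
    · left; rw [hxre, h, hwre]; ring
    · right; rw [hxre, h, hwre]; ring
  · rcases abs_choice w.im with h | h
    · left; rw [hyim, h, hwim]; ring
    · right; rw [hyim, h, hwim]; ring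


namespace GaussCon

open Finset

/-- double-indexing a range sum -/
theorem sum_range_mul' {M : Type*} [AddCommMonoid M] (h : ℕ → M) (c : ℕ) :
    ∀ d : ℕ, ∑ s ∈ range (c * d), h s = ∑ i ∈ range d, ∑ t ∈ range c, h (i * c + t) := by
  intro d
  induction d with
  | zero => simp
  | succ d ih =>
    have hc : c * (d + 1) = c * d + c := by ring
    rw [hc, Finset.sum_range_add, ih, Finset.sum_range_succ]
    congr 1
    exact Finset.sum_congr rfl fun t _ => by rw [mul_comm c d]

noncomputable def zet (p : ℕ) : ℂ := Complex.exp (2 * ↑Real.pi * Complex.I / p)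

noncomputable def ff (p : ℕ) (v : ZMod p) : ℂ := zet p ^ v.val

noncomputable def per (p : ℕ) (m : ℕ) (γ : ZMod p) (k j : ℕ) : ℂ :=
  ∑ i ∈ range (2 ^ (m - k)), ff p (γ ^ (j + i * 2 ^ k))

def cnt (p : ℕ) (m : ℕ) (γ : ZMod p) (k j : ℕ) (v : ZMod p) : ℕ :=
  ((range (2 ^ (m - (k+1))) ×ˢ range (2 ^ (m - (k+1)))).filter
    (fun ab => γ ^ (j + ab.1 * 2 ^ (k+1)) + γ ^ (j + 2 ^ k + ab.2 * 2 ^ (k+1)) = v)).card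

section

variable {p m : ℕ} [hpf : Fact p.Prime] {γ : ZMod p}

theorem zet_prim : IsPrimitiveRoot (zet p) p :=
  Complex.isPrimitiveRoot_exp p hpf.out.ne_zero

theorem zet_pow_p : zet p ^ p = 1 := zet_prim.pow_eq_one

theorem zet_mod (n : ℕ) : zet p ^ (n % p) = zet p ^ n := by
  conv_rhs => rw [← Nat.div_add_mod n p]
  rw [pow_add, pow_mul, zet_pow_p, one_pow, one_mul]

theorem ff_zero : ff p 0 = 1 := by
  have : NeZero p := ⟨hpf.out.ne_zero⟩
  simp [ff]

theorem ff_one (hp1 : 1 < p) : ff p 1 = zet p := by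
  have : Fact (1 < p) := ⟨hp1⟩
  rw [ff, ZMod.val_one, pow_one]

theorem ff_add (u v : ZMod p) : ff p (u + v) = ff p u * ff p v := by
  have : NeZero p := ⟨hpf.out.ne_zero⟩
  rw [ff, ff, ff, ZMod.val_add, zet_mod, pow_add]

theorem ff_sum : ∑ v : ZMod p, ff p v = 0 := by
  have : NeZero p := ⟨hpf.out.ne_zero⟩
  rw [show (∑ v : ZMod p, ff p v) = ∑ i ∈ range p, zet p ^ i from ?_]
  · exact zet_prim.geom_sum_eq_zero hpf.out.one_lt
  · refine Finset.sum_nbij' (fun v => v.val) (fun i => (i : ZMod p)) ?_ ?_ ?_ ?_ ?_ <;>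
      simp +contextual [ZMod.val_lt, ZMod.natCast_val, ZMod.cast_id, ZMod.val_cast_of_lt, ff, Nat.mod_eq_of_lt]

variable (hord : orderOf γ = 2 ^ m) (hγ0 : γ ≠ 0)
  (hsurj : ∀ v : ZMod p, v ≠ 0 → ∃ s < 2 ^ m, γ ^ s = v)

include hord

theorem gam_pow_ord : γ ^ (2 ^ m : ℕ) = 1 := by rw [← hord]; exact pow_orderOf_eq_one γ

theorem gam_congr {x y : ℕ} (h : x % 2 ^ m = y % 2 ^ m) : γ ^ x = γ ^ y := by
  have hred : ∀ n : ℕ, γ ^ n = γ ^ (n % 2 ^ m) := by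
    intro n
    conv_lhs => rw [← Nat.div_add_mod n (2 ^ m)]
    rw [pow_add, pow_mul, gam_pow_ord hord, one_pow, one_mul]
  rw [hred x, hred y, h]

include hγ0 in
theorem gam_pow_inj {i i' : ℕ} (hi : i < 2 ^ m) (hi' : i' < 2 ^ m) (h : γ ^ i = γ ^ i') :
    i = i' := by
  have key : ∀ a b : ℕ, a ≤ b → b < 2 ^ m → γ ^ a = γ ^ b → a = b := by
    intro a b hab hb hh
    by_contra hne
    have h1 : γ ^ a * γ ^ (b - a) = γ ^ a * 1 := by
      rw [mul_one, ← pow_add, show a + (b - a) = b by omega]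
      exact hh.symm
    have h2 : γ ^ (b - a) = 1 := mul_left_cancel₀ (pow_ne_zero _ hγ0) h1
    have h3 : orderOf γ ∣ b - a := orderOf_dvd_of_pow_eq_one h2
    rw [hord] at h3
    have := Nat.le_of_dvd (by omega) h3
    omega
  rcases le_total i i' with hle | hle
  · exact key i i' hle hi' h
  · exact (key i' i hle hi h.symm).symm

include hγ0 hsurj in
theorem sum_pow_eq_sum_nonzero (F : ZMod p → ℂ) :
    ∑ s ∈ range (2 ^ m), F (γ ^ s) = ∑ v ∈ Finset.univ.erase (0 : ZMod p), F v := by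
  refine Finset.sum_bij (fun s _ => γ ^ s) ?_ ?_ ?_ ?_
  · intro s hs
    exact Finset.mem_erase.mpr ⟨pow_ne_zero _ hγ0, Finset.mem_univ _⟩
  · intro a ha b hb hh
    exact gam_pow_inj hord hγ0 (mem_range.mp ha) (mem_range.mp hb) hh
  · intro v hv
    obtain ⟨s, hs, hsv⟩ := hsurj v (Finset.mem_erase.mp hv).1
    exact ⟨s, mem_range.mpr hs, hsv⟩
  · intro s hs; rfl

include hγ0 hsurj in
theorem per_zero_zero : per p m γ 0 0 = -1 := by
  have h1 : per p m γ 0 0 = ∑ s ∈ range (2 ^ m), ff p (γ ^ s) := by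
    rw [per]
    simp
  rw [h1, sum_pow_eq_sum_nonzero hord hγ0 hsurj]
  have h2 := ff_sum (p := p)
  rw [← Finset.sum_erase_add _ _ (Finset.mem_univ (0 : ZMod p)), ff_zero] at h2
  linear_combination h2

theorem per_m_zero (hp1 : 1 < p) : per p m γ m 0 = zet p := by
  rw [per]
  simp [ff_one hp1]

omit hord in
/-- splitting a period into its two children -/
theorem per_split {k : ℕ} (hk : k < m) (j : ℕ) :
    per p m γ k j = per p m γ (k+1) j + per p m γ (k+1) (j + 2 ^ k) := by
  have h1 : (2 : ℕ) ^ (m - k) = 2 * 2 ^ (m - (k+1)) := by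
    rw [← pow_succ']
    congr 1
    omega
  rw [per, h1, sum_range_mul', per, per, ← Finset.sum_add_distrib]
  refine Finset.sum_congr rfl fun i _ => ?_
  rw [Finset.sum_range_succ, Finset.sum_range_one]
  have e1 : j + (i * 2 + 0) * 2 ^ k = j + i * 2 ^ (k+1) := by rw [pow_succ]; ring
  have e2 : j + (i * 2 + 1) * 2 ^ k = j + 2 ^ k + i * 2 ^ (k+1) := by rw [pow_succ]; ring
  rw [e1, e2]

omit hord in
/-- the product of the two children as a double sum -/
theorem per_product {k : ℕ} (j : ℕ) :
    per p m γ (k+1) j * per p m γ (k+1) (j + 2 ^ k) =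
      ∑ ab ∈ range (2 ^ (m - (k+1))) ×ˢ range (2 ^ (m - (k+1))),
        ff p (γ ^ (j + ab.1 * 2 ^ (k+1)) + γ ^ (j + 2 ^ k + ab.2 * 2 ^ (k+1))) := by
  rw [per, per, Finset.sum_mul_sum, Finset.sum_product]
  refine Finset.sum_congr rfl fun a _ => Finset.sum_congr rfl fun b _ => ?_
  rw [← ff_add]

theorem gam_drop (x y : ℕ) : γ ^ (x + y * 2 ^ m) = γ ^ x := by
  rw [pow_add, mul_comm y, pow_mul, gam_pow_ord hord, one_pow, mul_one]

include hγ0 in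
theorem cnt_inv {k : ℕ} (hk : k < m) (j : ℕ) (v : ZMod p) :
    cnt p m γ k j (γ ^ (2 ^ k : ℕ) * v) = cnt p m γ k j v := by
  classical
  set L := 2 ^ (m - (k+1)) with hL
  have hLpos : 0 < L := Nat.pow_pos (by norm_num)
  have hL2m : L * 2 ^ (k+1) = 2 ^ m := by
    rw [hL, ← pow_add]
    congr 1
    omega
  set u : ℕ → ℕ → ZMod p :=
    fun a b => γ ^ (j + a * 2 ^ (k+1)) + γ ^ (j + 2 ^ k + b * 2 ^ (k+1)) with hu
  have hmod : ∀ b : ℕ, γ ^ (j + ((b+1) % L) * 2 ^ (k+1)) = γ ^ (j + (b+1) * 2 ^ (k+1)) := by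
    intro b
    have e : j + (b+1) * 2 ^ (k+1) = j + ((b+1) % L) * 2 ^ (k+1) + ((b+1) / L) * 2 ^ m := by
      rw [← hL2m]
      conv_lhs => rw [← Nat.div_add_mod (b+1) L]
      ring
    rw [e, gam_drop hord]
  have key : ∀ a b : ℕ, u ((b+1) % L) a = γ ^ (2 ^ k : ℕ) * u a b := by
    intro a b
    rw [hu]
    simp only
    rw [mul_add, ← pow_add, ← pow_add, hmod b]
    have e1 : j + (b+1) * 2 ^ (k+1) = 2 ^ k + (j + 2 ^ k + b * 2 ^ (k+1)) := by
      rw [pow_succ]; ring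
    have e2 : j + 2 ^ k + a * 2 ^ (k+1) = 2 ^ k + (j + a * 2 ^ (k+1)) := by ring
    rw [e1, e2, add_comm]
  have mf1 : ∀ c : ℕ, c < L → (((c + L - 1) % L) + 1) % L = c := by
    intro c hc
    rcases Nat.eq_zero_or_pos c with rfl | hcpos
    · have e0 : 0 + L - 1 = L - 1 := by omega
      have h1 : (L - 1) % L = L - 1 := Nat.mod_eq_of_lt (by omega)
      have h2 : L - 1 + 1 = L := by omega
      rw [e0, h1, h2, Nat.mod_self]
    · have e0 : c + L - 1 = L + (c - 1) := by omega
      have h1 : (L + (c - 1)) % L = c - 1 := by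
        rw [Nat.add_mod_left]
        exact Nat.mod_eq_of_lt (by omega)
      have h2 : c - 1 + 1 = c := by omega
      rw [e0, h1, h2, Nat.mod_eq_of_lt hc]
  have mf3 : ∀ b : ℕ, b < L → ((b+1) % L + L - 1) % L = b := by
    intro b hb
    rcases Nat.lt_or_ge (b+1) L with h | h
    · have h1 : (b + 1) % L = b + 1 := Nat.mod_eq_of_lt h
      have e0 : b + 1 + L - 1 = L + b := by omega
      rw [h1, e0, Nat.add_mod_left, Nat.mod_eq_of_lt hb]
    · have hbL : b + 1 = L := by omega
      have e0 : 0 + L - 1 = L - 1 := by omega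
      rw [hbL, Nat.mod_self, e0, Nat.mod_eq_of_lt (by omega)]
      omega
  rw [cnt, cnt]
  refine (Finset.card_bij' (fun ab _ => (((ab.2 + 1) % L), ab.1))
    (fun cd _ => ((cd.2 : ℕ), (cd.1 + L - 1) % L)) ?_ ?_ ?_ ?_).symm
  · rintro ⟨a, b⟩ hab
    rw [Finset.mem_filter, Finset.mem_product] at hab ⊢
    obtain ⟨⟨ha, hb⟩, huv⟩ := hab
    refine ⟨⟨mem_range.mpr (Nat.mod_lt _ hLpos), ha⟩, ?_⟩
    have := key a b
    rw [hu] at this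
    simp only at this huv ⊢
    rw [this, huv]
  · rintro ⟨c, d⟩ hcd
    rw [Finset.mem_filter, Finset.mem_product] at hcd ⊢
    obtain ⟨⟨hc, hd⟩, huv⟩ := hcd
    rw [mem_range] at hc hd
    refine ⟨⟨mem_range.mpr hd, mem_range.mpr (Nat.mod_lt _ hLpos)⟩, ?_⟩
    have hk2 : u c d = γ ^ (2 ^ k : ℕ) * u d ((c + L - 1) % L) := by
      have := key d ((c + L - 1) % L)
      rw [mf1 c hc] at this
      exact this
    have hγk : (γ : ZMod p) ^ (2 ^ k : ℕ) ≠ 0 := pow_ne_zero _ hγ0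
    simp only at huv ⊢
    have : γ ^ (2 ^ k : ℕ) * u d ((c + L - 1) % L) = γ ^ (2 ^ k : ℕ) * v := by
      rw [← hk2]
      exact huv
    exact mul_left_cancel₀ hγk this
  · rintro ⟨a, b⟩ hab
    rw [Finset.mem_filter, Finset.mem_product, mem_range, mem_range] at hab
    simp only
    rw [mf3 b hab.1.2]
  · rintro ⟨c, d⟩ hcd
    rw [Finset.mem_filter, Finset.mem_product, mem_range, mem_range] at hcd
    simp only
    rw [mf1 c hcd.1.1]

include hγ0 in
theorem cnt_inv_iter {k : ℕ} (hk : k < m) (j t : ℕ) :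
    ∀ i : ℕ, cnt p m γ k j (γ ^ (i * 2 ^ k + t)) = cnt p m γ k j (γ ^ t) := by
  intro i
  induction i with
  | zero => simp
  | succ i ih =>
    have e : (i + 1) * 2 ^ k + t = 2 ^ k + (i * 2 ^ k + t) := by ring
    rw [e, pow_add, cnt_inv hord hγ0 hk, ih]

omit hord in
theorem prod_eq_cnt_sum {k : ℕ} (j : ℕ) :
    per p m γ (k+1) j * per p m γ (k+1) (j + 2 ^ k) =
      ∑ v : ZMod p, (cnt p m γ k j v : ℂ) * ff p v := by
  classical
  rw [per_product]
  have hfilter : (range (2 ^ (m - (k+1))) ×ˢ range (2 ^ (m - (k+1)))) =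
      (range (2 ^ (m - (k+1))) ×ˢ range (2 ^ (m - (k+1)))).filter
        (fun ab => (γ ^ (j + ab.1 * 2 ^ (k+1)) + γ ^ (j + 2 ^ k + ab.2 * 2 ^ (k+1)))
          ∈ (Finset.univ : Finset (ZMod p))) := by simp
  conv_lhs => rw [hfilter]
  rw [← Finset.sum_fiberwise_eq_sum_filter
    (range (2 ^ (m - (k+1))) ×ˢ range (2 ^ (m - (k+1)))) Finset.univ
    (fun ab => γ ^ (j + ab.1 * 2 ^ (k+1)) + γ ^ (j + 2 ^ k + ab.2 * 2 ^ (k+1)))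
    (fun ab => ff p (γ ^ (j + ab.1 * 2 ^ (k+1)) + γ ^ (j + 2 ^ k + ab.2 * 2 ^ (k+1))))]
  refine Finset.sum_congr rfl fun v _ => ?_
  rw [cnt]
  rw [Finset.sum_congr rfl (g := fun _ => ff p v) ?_]
  · rw [Finset.sum_const, nsmul_eq_mul]
  · intro ab hab
    rw [Finset.mem_filter] at hab
    rw [hab.2]

include hγ0 hsurj in
theorem regroup {k : ℕ} (hk : k < m) (j : ℕ) :
    ∑ v : ZMod p, (cnt p m γ k j v : ℂ) * ff p v
      = (cnt p m γ k j 0 : ℂ)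
        + ∑ t ∈ range (2 ^ k), (cnt p m γ k j (γ ^ t) : ℂ) * per p m γ k t := by
  classical
  rw [← Finset.sum_erase_add _ _ (Finset.mem_univ (0 : ZMod p)), ff_zero, mul_one, add_comm]
  congr 1
  rw [← sum_pow_eq_sum_nonzero hord hγ0 hsurj (fun v => (cnt p m γ k j v : ℂ) * ff p v)]
  have h2m : (2:ℕ) ^ m = 2 ^ k * 2 ^ (m - k) := by
    rw [← pow_add]
    congr 1
    omega
  rw [h2m, sum_range_mul', Finset.sum_comm]
  refine Finset.sum_congr rfl fun t ht => ?_
  rw [per, Finset.mul_sum]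
  refine Finset.sum_congr rfl fun i hi => ?_
  rw [cnt_inv_iter hord hγ0 hk j t i]
  congr 2
  ring

omit hord in
theorem cnt_le {k j : ℕ} (v : ZMod p) :
    cnt p m γ k j v ≤ 2 ^ (m - (k+1)) * 2 ^ (m - (k+1)) := by
  classical
  calc cnt p m γ k j v ≤ (range (2 ^ (m - (k+1))) ×ˢ range (2 ^ (m - (k+1)))).card :=
        Finset.card_filter_le _ _
    _ = 2 ^ (m - (k+1)) * 2 ^ (m - (k+1)) := by simp

end

end GaussCon

namespace GaussCon

theorem half_add_sqrt_nonneg (a b : ℝ) : 0 ≤ (Real.sqrt (a*a + b*b) + a)/2 := by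
  have h1 : |a| = Real.sqrt (a*a) := (Real.sqrt_mul_self_eq_abs a).symm
  have h2 : Real.sqrt (a*a) ≤ Real.sqrt (a*a + b*b) := Real.sqrt_le_sqrt (by nlinarith)
  have h3 : -a ≤ |a| := neg_le_abs a
  linarith

theorem half_sub_sqrt_nonneg (a b : ℝ) : 0 ≤ (Real.sqrt (a*a + b*b) - a)/2 := by
  have h1 : |a| = Real.sqrt (a*a) := (Real.sqrt_mul_self_eq_abs a).symm
  have h2 : Real.sqrt (a*a) ≤ Real.sqrt (a*a + b*b) := Real.sqrt_le_sqrt (by nlinarith)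
  have h3 : a ≤ |a| := le_abs_self a
  linarith

set_option maxHeartbeats 1000000 in
theorem block_step {A : Set ℝ} {Sre Sim Qre Qim : ℝ}
    (h2 : (2:ℝ) ∈ A) (h4 : (4:ℝ) ∈ A) (hSre : Sre ∈ A) (hSim : Sim ∈ A)
    (hQre : Qre ∈ A) (hQim : Qim ∈ A) :
    ∃ B, Reach 27 A B ∧ A ⊆ B ∧
      ((Sre + Real.sqrt ((Real.sqrt ((Sre*Sre - Sim*Sim - 4*Qre)*(Sre*Sre - Sim*Sim - 4*Qre)
          + (2*(Sre*Sim) - 4*Qim)*(2*(Sre*Sim) - 4*Qim))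
          + (Sre*Sre - Sim*Sim - 4*Qre))/2))/2 ∈ B) ∧
      ((Sre - Real.sqrt ((Real.sqrt ((Sre*Sre - Sim*Sim - 4*Qre)*(Sre*Sre - Sim*Sim - 4*Qre)
          + (2*(Sre*Sim) - 4*Qim)*(2*(Sre*Sim) - 4*Qim))
          + (Sre*Sre - Sim*Sim - 4*Qre))/2))/2 ∈ B) ∧
      ((Sim + Real.sqrt ((Real.sqrt ((Sre*Sre - Sim*Sim - 4*Qre)*(Sre*Sre - Sim*Sim - 4*Qre)
          + (2*(Sre*Sim) - 4*Qim)*(2*(Sre*Sim) - 4*Qim))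
          - (Sre*Sre - Sim*Sim - 4*Qre))/2))/2 ∈ B) ∧
      ((Sim - Real.sqrt ((Real.sqrt ((Sre*Sre - Sim*Sim - 4*Qre)*(Sre*Sre - Sim*Sim - 4*Qre)
          + (2*(Sre*Sim) - 4*Qim)*(2*(Sre*Sim) - 4*Qim))
          - (Sre*Sre - Sim*Sim - 4*Qre))/2))/2 ∈ B) := by
  have RR : Reach 0 A A := reach_refl A 0
  have SS : A ⊆ A := subset_rfl
  obtain ⟨B1, r1, s1, m_t1⟩ := ext_mul hSre hSre
  have h2 := s1 h2
  have h4 := s1 h4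
  have hQim := s1 hQim
  have hQre := s1 hQre
  have hSim := s1 hSim
  have hSre := s1 hSre
  have RR := reach_trans RR r1
  have SS := SS.trans s1
  obtain ⟨B2, r2, s2, m_t2⟩ := ext_mul hSim hSim
  have h2 := s2 h2
  have h4 := s2 h4
  have hQim := s2 hQim
  have hQre := s2 hQre
  have hSim := s2 hSim
  have hSre := s2 hSre
  have m_t1 := s2 m_t1
  have RR := reach_trans RR r2
  have SS := SS.trans s2
  obtain ⟨B3, r3, s3, m_t3⟩ := ext_sub m_t1 m_t2
  have h2 := s3 h2
  have h4 := s3 h4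
  have hQim := s3 hQim
  have hQre := s3 hQre
  have hSim := s3 hSim
  have hSre := s3 hSre
  have RR := reach_trans RR r3
  have SS := SS.trans s3
  obtain ⟨B4, r4, s4, m_t4⟩ := ext_mul h4 hQre
  have h2 := s4 h2
  have h4 := s4 h4
  have hQim := s4 hQim
  have hSim := s4 hSim
  have hSre := s4 hSre
  have m_t3 := s4 m_t3
  have RR := reach_trans RR r4
  have SS := SS.trans s4
  obtain ⟨B5, r5, s5, m_ea⟩ := ext_sub m_t3 m_t4
  have h2 := s5 h2
  have h4 := s5 h4
  have hQim := s5 hQim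
  have hSim := s5 hSim
  have hSre := s5 hSre
  have RR := reach_trans RR r5
  have SS := SS.trans s5
  obtain ⟨B6, r6, s6, m_t5⟩ := ext_mul hSre hSim
  have h2 := s6 h2
  have h4 := s6 h4
  have hQim := s6 hQim
  have hSim := s6 hSim
  have hSre := s6 hSre
  have m_ea := s6 m_ea
  have RR := reach_trans RR r6
  have SS := SS.trans s6
  obtain ⟨B7, r7, s7, m_t6⟩ := ext_mul h2 m_t5
  have h2 := s7 h2
  have h4 := s7 h4
  have hQim := s7 hQim
  have hSim := s7 hSim
  have hSre := s7 hSre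
  have m_ea := s7 m_ea
  have RR := reach_trans RR r7
  have SS := SS.trans s7
  obtain ⟨B8, r8, s8, m_t7⟩ := ext_mul h4 hQim
  have h2 := s8 h2
  have hSim := s8 hSim
  have hSre := s8 hSre
  have m_ea := s8 m_ea
  have m_t6 := s8 m_t6
  have RR := reach_trans RR r8
  have SS := SS.trans s8
  obtain ⟨B9, r9, s9, m_eb⟩ := ext_sub m_t6 m_t7
  have h2 := s9 h2
  have hSim := s9 hSim
  have hSre := s9 hSre
  have m_ea := s9 m_ea
  have RR := reach_trans RR r9
  have SS := SS.trans s9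
  obtain ⟨B10, r10, s10, m_t8⟩ := ext_mul m_ea m_ea
  have h2 := s10 h2
  have hSim := s10 hSim
  have hSre := s10 hSre
  have m_ea := s10 m_ea
  have m_eb := s10 m_eb
  have RR := reach_trans RR r10
  have SS := SS.trans s10
  obtain ⟨B11, r11, s11, m_t9⟩ := ext_mul m_eb m_eb
  have h2 := s11 h2
  have hSim := s11 hSim
  have hSre := s11 hSre
  have m_ea := s11 m_ea
  have m_t8 := s11 m_t8
  have RR := reach_trans RR r11
  have SS := SS.trans s11
  obtain ⟨B12, r12, s12, m_t10⟩ := ext_add m_t8 m_t9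
  have h2 := s12 h2
  have hSim := s12 hSim
  have hSre := s12 hSre
  have m_ea := s12 m_ea
  have RR := reach_trans RR r12
  have SS := SS.trans s12
  obtain ⟨B13, r13, s13, m_er⟩ := ext_sqrt m_t10 (add_nonneg (mul_self_nonneg _) (mul_self_nonneg _))
  have h2 := s13 h2
  have hSim := s13 hSim
  have hSre := s13 hSre
  have m_ea := s13 m_ea
  have RR := reach_trans RR r13
  have SS := SS.trans s13
  obtain ⟨B14, r14, s14, m_t11⟩ := ext_add m_er m_ea
  have h2 := s14 h2
  have hSim := s14 hSim
  have hSre := s14 hSre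
  have m_ea := s14 m_ea
  have m_er := s14 m_er
  have RR := reach_trans RR r14
  have SS := SS.trans s14
  obtain ⟨B15, r15, s15, m_t12⟩ := ext_div m_t11 h2 two_ne_zero
  have h2 := s15 h2
  have hSim := s15 hSim
  have hSre := s15 hSre
  have m_ea := s15 m_ea
  have m_er := s15 m_er
  have RR := reach_trans RR r15
  have SS := SS.trans s15
  obtain ⟨B16, r16, s16, m_ex⟩ := ext_sqrt m_t12 (half_add_sqrt_nonneg _ _)
  have h2 := s16 h2
  have hSim := s16 hSim
  have hSre := s16 hSre
  have m_ea := s16 m_ea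
  have m_er := s16 m_er
  have RR := reach_trans RR r16
  have SS := SS.trans s16
  obtain ⟨B17, r17, s17, m_t13⟩ := ext_sub m_er m_ea
  have h2 := s17 h2
  have hSim := s17 hSim
  have hSre := s17 hSre
  have m_ex := s17 m_ex
  have RR := reach_trans RR r17
  have SS := SS.trans s17
  obtain ⟨B18, r18, s18, m_t14⟩ := ext_div m_t13 h2 two_ne_zero
  have h2 := s18 h2
  have hSim := s18 hSim
  have hSre := s18 hSre
  have m_ex := s18 m_ex
  have RR := reach_trans RR r18
  have SS := SS.trans s18
  obtain ⟨B19, r19, s19, m_ey⟩ := ext_sqrt m_t14 (half_sub_sqrt_nonneg _ _)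
  have h2 := s19 h2
  have hSim := s19 hSim
  have hSre := s19 hSre
  have m_ex := s19 m_ex
  have RR := reach_trans RR r19
  have SS := SS.trans s19
  obtain ⟨B20, r20, s20, m_u1⟩ := ext_add hSre m_ex
  have h2 := s20 h2
  have hSim := s20 hSim
  have hSre := s20 hSre
  have m_ex := s20 m_ex
  have m_ey := s20 m_ey
  have RR := reach_trans RR r20
  have SS := SS.trans s20
  obtain ⟨B21, r21, s21, m_o1⟩ := ext_div m_u1 h2 two_ne_zero
  have h2 := s21 h2
  have hSim := s21 hSim
  have hSre := s21 hSre
  have m_ex := s21 m_ex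
  have m_ey := s21 m_ey
  have RR := reach_trans RR r21
  have SS := SS.trans s21
  obtain ⟨B22, r22, s22, m_u2⟩ := ext_sub hSre m_ex
  have h2 := s22 h2
  have hSim := s22 hSim
  have m_ey := s22 m_ey
  have m_o1 := s22 m_o1
  have RR := reach_trans RR r22
  have SS := SS.trans s22
  obtain ⟨B23, r23, s23, m_o2⟩ := ext_div m_u2 h2 two_ne_zero
  have h2 := s23 h2
  have hSim := s23 hSim
  have m_ey := s23 m_ey
  have m_o1 := s23 m_o1
  have RR := reach_trans RR r23
  have SS := SS.trans s23
  obtain ⟨B24, r24, s24, m_u3⟩ := ext_add hSim m_ey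
  have h2 := s24 h2
  have hSim := s24 hSim
  have m_ey := s24 m_ey
  have m_o1 := s24 m_o1
  have m_o2 := s24 m_o2
  have RR := reach_trans RR r24
  have SS := SS.trans s24
  obtain ⟨B25, r25, s25, m_o3⟩ := ext_div m_u3 h2 two_ne_zero
  have h2 := s25 h2
  have hSim := s25 hSim
  have m_ey := s25 m_ey
  have m_o1 := s25 m_o1
  have m_o2 := s25 m_o2
  have RR := reach_trans RR r25
  have SS := SS.trans s25
  obtain ⟨B26, r26, s26, m_u4⟩ := ext_sub hSim m_ey
  have h2 := s26 h2
  have m_o1 := s26 m_o1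
  have m_o2 := s26 m_o2
  have m_o3 := s26 m_o3
  have RR := reach_trans RR r26
  have SS := SS.trans s26
  obtain ⟨B27, r27, s27, m_o4⟩ := ext_div m_u4 h2 two_ne_zero
  have m_o1 := s27 m_o1
  have m_o2 := s27 m_o2
  have m_o3 := s27 m_o3
  have RR := reach_trans RR r27
  have SS := SS.trans s27
  exact ⟨B27, reach_mono (by omega) RR, SS, m_o1, m_o2, m_o3, m_o4⟩

end GaussCon

namespace GaussCon

open Finset

section

variable {p m : ℕ} [hpf : Fact p.Prime] {γ : ZMod p}
variable (hord : orderOf γ = 2 ^ m) (hγ0 : γ ≠ 0)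
  (hsurj : ∀ v : ZMod p, v ≠ 0 → ∃ s < 2 ^ m, γ ^ s = v)

include hord hγ0 hsurj

set_option maxHeartbeats 1000000 in
theorem pair_step (hp2m : 2 ^ m < p) {k : ℕ} (hk : k < m)
    {A : Set ℝ} (hA : ∀ n : ℕ, n ≤ p * p → (n : ℝ) ∈ A)
    (hper : ∀ t, t < 2 ^ k → (per p m γ k t).re ∈ A ∧ (per p m γ k t).im ∈ A)
    {j : ℕ} (hj : j < 2 ^ k) :
    ∃ B, Reach (4 * 2 ^ k + 31) A B ∧ A ⊆ B ∧
      (per p m γ (k+1) j).re ∈ B ∧ (per p m γ (k+1) j).im ∈ B ∧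
      (per p m γ (k+1) (j + 2 ^ k)).re ∈ B ∧ (per p m γ (k+1) (j + 2 ^ k)).im ∈ B := by
  classical
  have hp2 : 2 ≤ p := hpf.out.two_le
  have hcntle : ∀ v : ZMod p, cnt p m γ k j v ≤ p * p := by
    intro v
    have h1 : (2:ℕ) ^ (m - (k+1)) ≤ 2 ^ m := Nat.pow_le_pow_right (by norm_num) (by omega)
    have := cnt_le (p := p) (m := m) (γ := γ) (k := k) (j := j) v
    have h2 : 2 ^ (m - (k+1)) * 2 ^ (m - (k+1)) ≤ p * p :=
      Nat.mul_le_mul (le_of_lt (lt_of_le_of_lt h1 hp2m)) (le_of_lt (lt_of_le_of_lt h1 hp2m))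
    omega
  have m_zero : (0:ℝ) ∈ A := by exact_mod_cast hA 0 (Nat.zero_le _)
  have m_two : (2:ℝ) ∈ A := by
    have := hA 2 (le_trans (by norm_num) (Nat.mul_le_mul hp2 hp2))
    exact_mod_cast this
  have m_four : (4:ℝ) ∈ A := by
    have := hA 4 (Nat.mul_le_mul hp2 hp2)
    exact_mod_cast this
  -- step 1 : real part combination
  obtain ⟨B1, r1, s1, m_T1⟩ := ext_combo (range (2 ^ k))
    (fun t => ((cnt p m γ k j (γ ^ t) : ℕ) : ℝ)) (fun t => (per p m γ k t).re) m_zero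
    (fun t ht => ⟨hA _ (hcntle _), (hper t (mem_range.mp ht)).1⟩)
  -- step 2 : Qre
  obtain ⟨B2, r2, s2, m_Qre⟩ := ext_add (s1 (hA _ (hcntle (0 : ZMod p)))) m_T1
  -- step 3 : imaginary part combination
  obtain ⟨B3, r3, s3, m_Qim⟩ := ext_combo (range (2 ^ k))
    (fun t => ((cnt p m γ k j (γ ^ t) : ℕ) : ℝ)) (fun t => (per p m γ k t).im)
    (s2 (s1 m_zero))
    (fun t ht => ⟨s2 (s1 (hA _ (hcntle _))), s2 (s1 (hper t (mem_range.mp ht)).2)⟩)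
  -- step 4 : the 27-operation block
  obtain ⟨B4, r4, s4, m_o1, m_o2, m_o3, m_o4⟩ := block_step
    (s3 (s2 (s1 m_two))) (s3 (s2 (s1 m_four)))
    (s3 (s2 (s1 (hper j hj).1))) (s3 (s2 (s1 (hper j hj).2)))
    (s3 m_Qre) m_Qim
  have RR := reach_trans r1 (reach_trans r2 (reach_trans r3 r4))
  have SS := ((s1.trans s2).trans s3).trans s4
  -- algebraic identification
  have hprod : per p m γ (k+1) j * per p m γ (k+1) (j + 2 ^ k)
      = (cnt p m γ k j 0 : ℂ)
        + ∑ t ∈ range (2 ^ k), (cnt p m γ k j (γ ^ t) : ℂ) * per p m γ k t := by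
    rw [prod_eq_cnt_sum, regroup hord hγ0 hsurj hk]
  have hsum : per p m γ (k+1) j + per p m γ (k+1) (j + 2 ^ k) = per p m γ k j :=
    (per_split hk j).symm
  set S : ℂ := per p m γ k j
  set Qc : ℂ := (cnt p m γ k j 0 : ℂ)
      + ∑ t ∈ range (2 ^ k), (cnt p m γ k j (γ ^ t) : ℂ) * per p m γ k t with hQc
  have hQcre : Qc.re = ((cnt p m γ k j 0 : ℕ) : ℝ)
      + ∑ t ∈ range (2 ^ k), ((cnt p m γ k j (γ ^ t) : ℕ) : ℝ) * (per p m γ k t).re := by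
    rw [hQc, Complex.add_re, Complex.re_sum]
    simp [Complex.mul_re]
  have hQcim : Qc.im
      = ∑ t ∈ range (2 ^ k), ((cnt p m γ k j (γ ^ t) : ℕ) : ℝ) * (per p m γ k t).im := by
    rw [hQc, Complex.add_im, Complex.im_sum]
    simp [Complex.mul_im]
  have ha : S.re * S.re - S.im * S.im
        - 4 * (((cnt p m γ k j 0 : ℕ) : ℝ)
          + ∑ t ∈ range (2 ^ k), ((cnt p m γ k j (γ ^ t) : ℕ) : ℝ) * (per p m γ k t).re)
      = (S ^ 2 - 4 * Qc).re := by
    rw [← hQcre]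
    simp only [pow_two, Complex.sub_re, Complex.mul_re, Complex.re_ofNat, Complex.im_ofNat]
    ring
  have hb : 2 * (S.re * S.im)
        - 4 * (∑ t ∈ range (2 ^ k), ((cnt p m γ k j (γ ^ t) : ℕ) : ℝ) * (per p m γ k t).im)
      = (S ^ 2 - 4 * Qc).im := by
    rw [← hQcim]
    simp only [pow_two, Complex.sub_im, Complex.mul_im, Complex.mul_re, Complex.re_ofNat,
      Complex.im_ofNat]
    ring
  have hq1 := quad_roots hsum hprod ha hb rfl rfl rfl
  have hq2 := quad_roots (by rw [add_comm] at hsum; exact hsum)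
    (by rw [mul_comm] at hprod; exact hprod) ha hb rfl rfl rfl
  refine ⟨B4, reach_mono ?_ RR, SS, ?_, ?_, ?_, ?_⟩
  · simp only [card_range]
    omega
  · rcases hq1.1 with h | h
    · rw [h]; exact m_o1
    · rw [h]; exact m_o2
  · rcases hq1.2 with h | h
    · rw [h]; exact m_o3
    · rw [h]; exact m_o4
  · rcases hq2.1 with h | h
    · rw [h]; exact m_o1
    · rw [h]; exact m_o2
  · rcases hq2.2 with h | h
    · rw [h]; exact m_o3
    · rw [h]; exact m_o4

theorem levels (hp2m : 2 ^ m < p)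
    {A0 : Set ℝ} (hA0 : ∀ n : ℕ, n ≤ p * p → (n : ℝ) ∈ A0) (hneg : (-1:ℝ) ∈ A0) :
    ∀ k, k ≤ m → ∃ B, Reach (35 * 4 ^ k) A0 B ∧ A0 ⊆ B ∧
      ∀ j, j < 2 ^ k → (per p m γ k j).re ∈ B ∧ (per p m γ k j).im ∈ B := by
  intro k
  induction k with
  | zero =>
    intro _
    refine ⟨A0, reach_mono (Nat.zero_le _) (reach_refl A0 0), subset_rfl, ?_⟩
    intro j hj
    interval_cases j
    constructor
    · rw [per_zero_zero hord hγ0 hsurj]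
      simpa using hneg
    · rw [per_zero_zero hord hγ0 hsurj]
      simpa using (by exact_mod_cast hA0 0 (Nat.zero_le _) : (0:ℝ) ∈ A0)
  | succ k ih =>
    intro hk1
    have hk : k < m := by omega
    obtain ⟨B, rB, sB, hperB⟩ := ih (by omega)
    have hAB : ∀ n : ℕ, n ≤ p * p → (n:ℝ) ∈ B := fun n hn => sB (hA0 n hn)
    have inner : ∀ d, d ≤ 2 ^ k → ∃ B', Reach (d * (4 * 2 ^ k + 31)) B B' ∧ B ⊆ B' ∧
        ∀ j, j < d → ((per p m γ (k+1) j).re ∈ B' ∧ (per p m γ (k+1) j).im ∈ B' ∧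
          (per p m γ (k+1) (j + 2 ^ k)).re ∈ B' ∧ (per p m γ (k+1) (j + 2 ^ k)).im ∈ B') := by
      intro d
      induction d with
      | zero =>
        intro _
        exact ⟨B, reach_mono (Nat.zero_le _) (reach_refl B 0), subset_rfl,
          fun j hj => absurd hj (by omega)⟩
      | succ d ihd =>
        intro hd
        obtain ⟨B', rB', sB', hmem⟩ := ihd (by omega)
        obtain ⟨B'', rB'', sB'', h1, h2, h3, h4⟩ := pair_step hord hγ0 hsurj hp2m hk
          (fun n hn => sB' (hAB n hn))
          (fun t ht => ⟨sB' (hperB t ht).1, sB' (hperB t ht).2⟩)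
          (show d < 2 ^ k by omega)
        refine ⟨B'', reach_mono (le_of_eq (by ring)) (reach_trans rB' rB''),
          sB'.trans sB'', ?_⟩
        intro j hj
        rcases Nat.lt_or_ge j d with h | h
        · obtain ⟨a1, a2, a3, a4⟩ := hmem j h
          exact ⟨sB'' a1, sB'' a2, sB'' a3, sB'' a4⟩
        · have : j = d := by omega
          subst this
          exact ⟨h1, h2, h3, h4⟩
    obtain ⟨B', rB', sB', hmem⟩ := inner (2 ^ k) le_rfl
    refine ⟨B', reach_mono ?_ (reach_trans rB rB'), sB.trans sB', ?_⟩
    · have h4k1 : (4:ℕ) ^ (k+1) = 4 * 4 ^ k := by ring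
      have h4k : (4:ℕ) ^ k = 2 ^ k * 2 ^ k := by
        rw [show (4:ℕ) = 2 * 2 by norm_num, mul_pow]
      have hz : 1 ≤ 2 ^ k := Nat.one_le_two_pow
      rw [h4k1, h4k]
      nlinarith [hz]
    · intro j hj
      rcases Nat.lt_or_ge j (2 ^ k) with h | h
      · exact ⟨(hmem j h).1, (hmem j h).2.1⟩
      · have hj2 : j - 2 ^ k < 2 ^ k := by
          have : (2:ℕ) ^ (k+1) = 2 ^ k + 2 ^ k := by ring
          omega
        obtain ⟨-, -, a3, a4⟩ := hmem (j - 2 ^ k) hj2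
        have hjj : j - 2 ^ k + 2 ^ k = j := by
          have : (2:ℕ) ^ (k+1) = 2 ^ k + 2 ^ k := by ring
          omega
        rw [hjj] at a3 a4
        exact ⟨a3, a4⟩

end

end GaussCon

set_option maxRecDepth 4000 in
/-- There is a real constant `C` (independent of `p`) such that for every prime Fermat
number `p = 2 ^ m + 1` (`m` a power of `2`), the number `cos (2π/p)` is constructible
from `{1}` in at most `C · p ^ 2` real operations. -/
theorem cos_constructible_real : ∃ C : ℝ, ∀ p m j : ℕ, m = 2 ^ j → p = 2 ^ m + 1 →
    p.Prime → ∃ n : ℕ, (n : ℝ) ≤ C * (p : ℝ) ^ 2 ∧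
      RConstructibleIn {1} (Real.cos (2 * Real.pi / p)) n := by
  refine ⟨100, ?_⟩
  intro p m j hm hpm hp
  haveI : Fact p.Prime := ⟨hp⟩
  have hm1 : 1 ≤ m := by
    rw [hm]
    exact Nat.one_le_two_pow
  have h2m : 2 ≤ 2 ^ m := by
    calc (2:ℕ) = 2 ^ 1 := rfl
    _ ≤ 2 ^ m := Nat.pow_le_pow_right (by norm_num) hm1
  have hp3 : 3 ≤ p := by omega
  obtain ⟨g, hg⟩ := IsCyclic.exists_generator (α := (ZMod p)ˣ)
  set γ : ZMod p := (g : ZMod p) with hγdef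
  have hcard : Fintype.card (ZMod p)ˣ = 2 ^ m := by
    rw [ZMod.card_units_eq_totient, Nat.totient_prime hp]
    omega
  have hordu : orderOf g = 2 ^ m := by
    rw [orderOf_eq_card_of_forall_mem_zpowers hg, Nat.card_eq_fintype_card, hcard]
  have hord : orderOf γ = 2 ^ m := by rw [hγdef, orderOf_units, hordu]
  have hγ0 : γ ≠ 0 := g.ne_zero
  have hsurj : ∀ v : ZMod p, v ≠ 0 → ∃ s < 2 ^ m, γ ^ s = v := by
    intro v hv
    obtain ⟨u, hu⟩ := isUnit_iff_ne_zero.mpr hv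
    obtain ⟨n, hn⟩ := (Submonoid.mem_powers_iff u g).mp (mem_powers_iff_mem_zpowers.mpr (hg u))
    refine ⟨n % 2 ^ m, Nat.mod_lt _ (by positivity), ?_⟩
    have h1 : γ ^ n = v := by rw [hγdef, ← Units.val_pow_eq_pow_val, hn, hu]
    have h2 : γ ^ (n % 2 ^ m) = γ ^ n :=
      GaussCon.gam_congr hord (Nat.mod_mod_of_dvd n dvd_rfl)
    rw [h2, h1]
  have hp2m : 2 ^ m < p := by omega
  obtain ⟨B0, r0, s0, hnat, hneg⟩ := GaussCon.ext_nats (Set.mem_singleton (1:ℝ)) (p * p)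
  obtain ⟨B, rB, sB, hper⟩ :=
    GaussCon.levels hord hγ0 hsurj hp2m hnat hneg m le_rfl
  have hcos : Real.cos (2 * Real.pi / p) ∈ B := by
    have h1 := (hper 0 (by positivity)).1
    rw [GaussCon.per_m_zero hord hp.one_lt] at h1
    have h2 : (GaussCon.zet p).re = Real.cos (2 * Real.pi / p) := by
      rw [GaussCon.zet, show (2 * (Real.pi:ℂ) * Complex.I / (p:ℂ))
        = (((2 * Real.pi / p : ℝ)):ℂ) * Complex.I by push_cast; ring]
      exact Complex.exp_ofReal_mul_I_re _
    rwa [h2] at h1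
  refine ⟨(p * p + 2) + 35 * 4 ^ m, ?_,
    GaussCon.rConstructibleIn_of_reach (GaussCon.reach_trans r0 rB) hcos⟩
  have h4m : (4:ℕ) ^ m = (p - 1) * (p - 1) := by
    rw [show (4:ℕ) = 2 * 2 by norm_num, mul_pow]
    have : (2:ℕ) ^ m = p - 1 := by omega
    rw [this]
  have hnum : (p * p + 2) + 35 * 4 ^ m ≤ 100 * (p * p) := by
    rw [h4m]
    obtain ⟨r, hr⟩ : ∃ r, p = r + 3 := ⟨p - 3, by omega⟩
    rw [hr, show r + 3 - 1 = r + 2 by omega]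
    nlinarith [Nat.zero_le r]
  calc ((p * p + 2) + 35 * 4 ^ m : ℕ) ≤ ((100 * (p * p) : ℕ) : ℝ) := by exact_mod_cast hnum
  _ = 100 * (p:ℝ) ^ 2 := by push_cast; ring
end
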